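/- arXiv:2409.03631 — 4 statements merged into one kernel-verified Lean document; each statement's English description precedes it below -/
import Mathlib

section
/- Let p and k both be prime. Then for any positive integer m, every nonzero element of the prime subfield F_p is a k-th power in the finite field F_{p^{km}}, i.e., F_p^× ≤ (F_{p^{km}}^×)^k. -/
lemma aux_cyclic_root {G : Type*} [Group G] [Finite G] [IsCyclic G] {k : ℕ} (hk : k ≠ 0)
    (hkd : k ∣ Nat.card G) {u : G} (hu : u ^ (Nat.card G / k) = 1) :
    ∃ v : G, v ^ k = u := by
  obtain ⟨g, hg⟩ := IsCyclic.exists_generator (α := G)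
  obtain ⟨j, hj⟩ := mem_powers_iff_mem_zpowers.mpr (hg u)
  have hj : g ^ j = u := hj
  have horder : orderOf g = Nat.card G := orderOf_eq_card_of_forall_mem_zpowers hg
  have h1 : g ^ (j * (Nat.card G / k)) = 1 := by
    rw [pow_mul, hj, hu]
  have h2 := orderOf_dvd_of_pow_eq_one h1
  rw [horder] at h2
  have hckpos : 0 < Nat.card G / k :=
    Nat.div_pos (Nat.le_of_dvd Nat.card_pos hkd) (Nat.pos_of_ne_zero hk)
  obtain ⟨s, hs⟩ := h2
  have hj2 : j * (Nat.card G / k) = k * s * (Nat.card G / k) := by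
    calc j * (Nat.card G / k) = Nat.card G * s := hs
      _ = k * (Nat.card G / k) * s := by rw [Nat.mul_div_cancel' hkd]
      _ = k * s * (Nat.card G / k) := by ring
  have h4 : k ∣ j := ⟨s, Nat.eq_of_mul_eq_mul_right hckpos hj2⟩
  refine ⟨g ^ (j / k), ?_⟩
  rw [← pow_mul, Nat.div_mul_cancel h4, hj]

theorem stmt1 (p k m : ℕ) [Fact p.Prime] (hk : k.Prime) (hm : 1 ≤ m) :
    ∀ a : ZMod p, a ≠ 0 → ∃ b : GaloisField p (k * m), b ≠ 0 ∧
      b ^ k = algebraMap (ZMod p) (GaloisField p (k * m)) a := by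
  intro a ha
  set F := GaloisField p (k * m) with hF
  set c : F := algebraMap (ZMod p) F a with hc
  have hcne : c ≠ 0 := by
    simp only [hc, ne_eq, map_eq_zero, ha, not_false_iff]
  have hc1 : c ^ (p - 1) = 1 := by
    rw [hc, ← map_pow, ZMod.pow_card_sub_one_eq_one ha, map_one]
  by_cases hp1 : p - 1 = 1
  · -- p = 2, so c = 1
    have hco : c = 1 := by rw [← pow_one c, ← hp1, hc1]
    exact ⟨1, one_ne_zero, by rw [one_pow, hco]⟩
  · by_cases hkp : k ∣ p - 1
    · -- hard case: k divides p - 1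
      have hkm : k * m ≠ 0 := Nat.mul_ne_zero hk.pos.ne' (by omega)
      have hcard : Nat.card F = p ^ (k * m) := GaloisField.card p (k * m) hkm
      -- key divisibility : (p - 1) * k ∣ p ^ (k * m) - 1
      have hpk : (p : ZMod k) = 1 := by
        have h0 : ((p - 1 : ℕ) : ZMod k) = 0 := (ZMod.natCast_eq_zero_iff _ _).mpr hkp
        have hp1' : p - 1 + 1 = p := Nat.succ_pred_eq_of_pos (Fact.out : p.Prime).pos
        calc (p : ZMod k) = ((p - 1 + 1 : ℕ) : ZMod k) := by rw [hp1']
          _ = ((p - 1 : ℕ) : ZMod k) + 1 := by push_cast; ring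
          _ = 1 := by rw [h0, zero_add]
      have hSdvd : (k : ℤ) ∣ ∑ i ∈ Finset.range (k * m), (p : ℤ) ^ i := by
        have h0 : ((∑ i ∈ Finset.range (k * m), (p : ℤ) ^ i : ℤ) : ZMod k) = 0 := by
          push_cast
          simp only [hpk, one_pow]
          simp [Finset.sum_const, Finset.card_range]
        exact_mod_cast (ZMod.intCast_zmod_eq_zero_iff_dvd _ _).mp h0
      have hgeom : ((p : ℤ) - 1) * ∑ i ∈ Finset.range (k * m), (p : ℤ) ^ i
          = (p : ℤ) ^ (k * m) - 1 := by
        rw [mul_comm]; exact geom_sum_mul (p : ℤ) (k * m)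
      have hdvdZ : ((p - 1 : ℕ) * k : ℤ) ∣ ((p : ℤ) ^ (k * m) - 1) := by
        obtain ⟨t, ht⟩ := hSdvd
        refine ⟨t, ?_⟩
        have hcast : ((p - 1 : ℕ) : ℤ) = (p : ℤ) - 1 := by
          have := (Fact.out : p.Prime).pos
          push_cast [Nat.cast_sub this]; ring
        rw [← hgeom, ht, hcast]
        ring
      have hple : 1 ≤ p ^ (k * m) := Nat.one_le_pow _ _ (Fact.out : p.Prime).pos
      have hdvdN : (p - 1) * k ∣ p ^ (k * m) - 1 := by
        have h5 : (((p - 1) * k : ℕ) : ℤ) ∣ (((p ^ (k * m) - 1 : ℕ) : ℤ)) := by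
          rwa [Nat.cast_sub hple, Nat.cast_pow, Nat.cast_one, Nat.cast_mul]
        exact_mod_cast h5
      obtain ⟨t, ht⟩ := hdvdN
      -- work in the units group
      have hkpos : 0 < k := hk.pos
      have hcardu : Nat.card Fˣ = p ^ (k * m) - 1 := by
        rw [Nat.card_units, hcard]
      have hkdvd : k ∣ Nat.card Fˣ := by
        rw [hcardu, ht]
        exact ⟨(p - 1) * t, by ring⟩
      set u : Fˣ := Units.mk0 c hcne with hu
      have hdiv : Nat.card Fˣ / k = (p - 1) * t := by
        rw [hcardu, ht, show (p - 1) * k * t = k * ((p - 1) * t) by ring]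
        exact Nat.mul_div_cancel_left _ hkpos
      have hupow : u ^ (Nat.card Fˣ / k) = 1 := by
        rw [hdiv]
        refine Units.ext ?_
        rw [Units.val_pow_eq_pow_val, Units.val_one, hu, Units.val_mk0, pow_mul, hc1, one_pow]
      obtain ⟨v, hv⟩ := aux_cyclic_root hkpos.ne' hkdvd hupow
      refine ⟨(v : F), v.ne_zero, ?_⟩
      have h6 : ((v ^ k : Fˣ) : F) = ((u : Fˣ) : F) := by rw [hv]
      simpa [hu] using h6
    · -- k coprime to p - 1
      have hco : Nat.Coprime (p - 1) k := ((hk.coprime_iff_not_dvd).mpr hkp).symm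
      have h1lt : 1 < p - 1 := by
        have : 1 ≤ p - 1 := Nat.le_sub_one_of_lt (Fact.out : p.Prime).one_lt
        omega
      obtain ⟨e, -, he⟩ := Nat.exists_mul_mod_eq_one_of_coprime hco.symm h1lt
      refine ⟨c ^ e, pow_ne_zero _ hcne, ?_⟩
      have hdecomp : k * e = (p - 1) * (k * e / (p - 1)) + 1 := by
        conv_lhs => rw [← Nat.div_add_mod (k * e) (p - 1)]
        rw [he, mul_comm]
      rw [← pow_mul, mul_comm e k, hdecomp, pow_succ, pow_mul, hc1, one_pow, one_mul]
end

section
/- Let q = p^n, k ≥ 2 with k dividing q−1, and let a, b be proper divisors of n such that both (q−1)/(p^a−1) and (q−1)/(p^b−1) divide k. Then (q−1)/(p^d−1) divides k where d = gcd(a,b). -/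
private lemma aux_pow_sub_one_dvd {p m n : ℕ} (h : m ∣ n) : p ^ m - 1 ∣ p ^ n - 1 := by
  obtain ⟨c, rfl⟩ := h
  simpa [pow_mul] using Nat.sub_dvd_pow_sub_pow (p ^ m) 1 c

theorem stmt9 (p n k a b : ℕ) (hp : p.Prime) (hk : 2 ≤ k) (hkq : k ∣ p ^ n - 1)
    (ha : a ∣ n) (han : a < n) (hb : b ∣ n) (hbn : b < n)
    (hda : (p ^ n - 1) / (p ^ a - 1) ∣ k) (hdb : (p ^ n - 1) / (p ^ b - 1) ∣ k) :
    (p ^ n - 1) / (p ^ Nat.gcd a b - 1) ∣ k := by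
  have hp2 : 2 ≤ p := hp.two_le
  have hn : 0 < n := lt_of_le_of_lt (Nat.zero_le a) han
  have hM : 0 < p ^ n - 1 := by
    have : 2 ≤ p ^ n := le_trans hp2 (Nat.le_self_pow hn.ne' p)
    omega
  -- a, b positive
  have hapos : 0 < a := by
    rcases Nat.eq_zero_or_pos a with h0 | h
    · subst h0; simp at hda; omega
    · exact h
  have hbpos : 0 < b := by
    rcases Nat.eq_zero_or_pos b with h0 | h
    · subst h0; simp at hdb; omega
    · exact h
  set d := Nat.gcd a b with hd
  have hdpos : 0 < d := Nat.gcd_pos_of_pos_left _ hapos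
  have hxpos : 0 < p ^ a - 1 := by
    have := Nat.one_lt_pow hapos.ne' (by omega : 1 < p); omega
  have hypos : 0 < p ^ b - 1 := by
    have := Nat.one_lt_pow hbpos.ne' (by omega : 1 < p); omega
  have hzpos : 0 < p ^ d - 1 := by
    have := Nat.one_lt_pow hdpos.ne' (by omega : 1 < p); omega
  have hxM : p ^ a - 1 ∣ p ^ n - 1 := aux_pow_sub_one_dvd ha
  have hyM : p ^ b - 1 ∣ p ^ n - 1 := aux_pow_sub_one_dvd hb
  have hzM : p ^ d - 1 ∣ p ^ n - 1 :=
    aux_pow_sub_one_dvd ((Nat.gcd_dvd_left a b).trans ha)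
  -- M ∣ (p^a-1)*k and M ∣ (p^b-1)*k
  have h1 : p ^ n - 1 ∣ (p ^ a - 1) * k :=
    (Nat.div_dvd_iff_dvd_mul hxM hxpos).mp hda
  have h2 : p ^ n - 1 ∣ (p ^ b - 1) * k :=
    (Nat.div_dvd_iff_dvd_mul hyM hypos).mp hdb
  have hg : p ^ n - 1 ∣ Nat.gcd (p ^ a - 1) (p ^ b - 1) * k := by
    rw [← Nat.gcd_mul_right]
    exact Nat.dvd_gcd h1 h2
  -- gcd (p^a-1) (p^b-1) ∣ p^d - 1
  set g := Nat.gcd (p ^ a - 1) (p ^ b - 1) with hgdef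
  have hgpos : 0 < g := Nat.gcd_pos_of_pos_left _ hxpos
  haveI : NeZero g := ⟨hgpos.ne'⟩
  have key : g ∣ p ^ d - 1 := by
    have hcast : ∀ m : ℕ, 0 < m → g ∣ p ^ m - 1 → (p : ZMod g) ^ m = 1 := by
      intro m hm hdvd
      have h1le : 1 ≤ p ^ m := Nat.one_le_pow _ _ (by omega)
      have : ((p ^ m - 1 : ℕ) : ZMod g) = 0 :=
        (ZMod.natCast_eq_zero_iff _ _).mpr hdvd
      rw [Nat.cast_sub h1le] at this
      push_cast at this
      linear_combination this
    have hpa : (p : ZMod g) ^ a = 1 := hcast a hapos (Nat.gcd_dvd_left _ _)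
    have hpb : (p : ZMod g) ^ b = 1 := hcast b hbpos (Nat.gcd_dvd_right _ _)
    have hoa : orderOf (p : ZMod g) ∣ a := orderOf_dvd_of_pow_eq_one hpa
    have hob : orderOf (p : ZMod g) ∣ b := orderOf_dvd_of_pow_eq_one hpb
    have hod : orderOf (p : ZMod g) ∣ d := Nat.dvd_gcd hoa hob
    have hpd : (p : ZMod g) ^ d = 1 := orderOf_dvd_iff_pow_eq_one.mp hod
    have h1le : 1 ≤ p ^ d := Nat.one_le_pow _ _ (by omega)
    rw [← ZMod.natCast_eq_zero_iff]
    rw [Nat.cast_sub h1le]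
    push_cast
    rw [hpd]
    ring
  have : p ^ n - 1 ∣ (p ^ d - 1) * k :=
    hg.trans (Nat.mul_dvd_mul_right key k)
  exact (Nat.div_dvd_iff_dvd_mul hzM hzpos).mpr this
end

section
/- Let G be the generalized Paley graph P(q,k) on F_q with q = p^n ≡ 1 (mod 2k), let θ generate F_q^×, fix a₁,...,a_{n−1} ∈ F_p not all zero, and set S = { b + a₁θ + ... + a_{n−1}θ^{n−1} : b ∈ F_p }. Let N₀ = Γ(0) \ (∇ ∪ {1}) and N₁ = Γ(1) \ (∇ ∪ {0}) where Γ(v) = v + (F_q^×)^k and ∇ = Γ(0) ∩ Γ(1). Then |N₀ ∩ S| = |N₁ ∩ S|. -/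
/-- Neighbor set of `v` in the generalized Paley graph `P(q,k)`:
`Γ(v) = v + (F_q^×)^k`. -/
def paleyGamma (p n k : ℕ) [Fact p.Prime] (v : GaloisField p n) :
    Set (GaloisField p n) :=
  {x | ∃ c : GaloisField p n, c ≠ 0 ∧ c ^ k = x - v}

/-!
Translation by `1` maps `S = t + 𝔽_p` onto itself and `Γ(0)` onto `Γ(1)`, so `Γ(0) ∩ S` and
`Γ(1) ∩ S` have the same size. The sets `N₀ ∩ S` and `N₁ ∩ S` arise from them by removing
`∇ ∩ S` and, if it lies in `S`, the point `1 ∈ Γ(0) \ Γ(1)`, resp. `0 ∈ Γ(1) \ Γ(0)`. The latter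
membership holds because `2k ∣ q - 1` makes `-1` a `k`-th power, and `1 ∈ S ↔ 0 ∈ S` again by
translation invariance of `S`.
-/

theorem FiniteField.exists_pow_eq_neg_one {K : Type*} [Field K] [Finite K] {k : ℕ}
    (hk : 2 * k ∣ Nat.card K - 1) : ∃ c : K, c ≠ 0 ∧ c ^ k = -1 := by
  obtain ⟨m, hm⟩ := hk
  obtain ⟨g, hg⟩ := IsCyclic.exists_ofOrder_eq_natCard (α := Kˣ)
  rw [Nat.card_units] at hg
  have hkm : k * m ≠ 0 := by
    intro h
    rw [mul_assoc, h] at hm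
    have := Finite.one_lt_card (α := K)
    omega
  -- `(g ^ m) ^ k` squares to `g ^ (q - 1) = 1` but is not `1`, so it is `-1`.
  have hsq : (((g ^ m) ^ k : Kˣ) : K) ^ 2 = 1 := by
    rw [← Units.val_pow_eq_pow_val, ← pow_mul, ← pow_mul,
      show m * (k * 2) = orderOf g by rw [hg, hm]; ring, pow_orderOf_eq_one, Units.val_one]
  have hne : (((g ^ m) ^ k : Kˣ) : K) ≠ 1 := by
    rw [Ne, Units.val_eq_one, ← pow_mul, mul_comm]
    exact pow_ne_one_of_lt_orderOf hkm (by rw [hg, hm, mul_assoc]; omega)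
  exact ⟨_, Units.ne_zero _, (sq_eq_one_iff.mp hsq).resolve_left hne⟩

theorem Set.ncard_diff_union_singleton_inter_add {α : Type*} [Finite α] {A C : Set α} {a : α}
    (hC : C ⊆ A) (ha : a ∈ A) (haC : a ∉ C) (S : Set α) :
    ((A \ (C ∪ {a})) ∩ S).ncard + (C ∩ S).ncard + ({a} ∩ S).ncard = (A ∩ S).ncard := by
  have hsub : (C ∪ {a}) ∩ S ⊆ A ∩ S :=
    Set.inter_subset_inter_left S (Set.union_subset hC (Set.singleton_subset_iff.mpr ha))
  have hdisj : Disjoint (C ∩ S) ({a} ∩ S) :=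
    Set.disjoint_of_subset Set.inter_subset_left Set.inter_subset_left
      (Set.disjoint_singleton_right.mpr haC)
  rw [add_assoc, ← Set.ncard_union_eq hdisj, ← Set.union_inter_distrib_right,
    Set.inter_sdiff_distrib_right, Set.ncard_sdiff_add_ncard_of_subset hsub]

theorem Set.ncard_image_inter_of_image_eq {α β : Type*} {f : α → β} (hf : Function.Injective f)
    {S : Set α} {T : Set β} (hST : f '' S = T) (X : Set α) :
    (f '' X ∩ T).ncard = (X ∩ S).ncard := by
  rw [← hST, ← Set.image_inter hf, Set.ncard_image_of_injective _ hf]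

theorem RingHom.image_add_one_setOf_eq_add {R A : Type*} [Ring R] [Ring A] (f : R →+* A)
    (t : A) :
    (· + 1) '' {x | ∃ b, x = f b + t} = {x | ∃ b, x = f b + t} := by
  ext x
  constructor
  · rintro ⟨_, ⟨b, rfl⟩, rfl⟩
    exact ⟨b + 1, by rw [map_add, map_one, add_right_comm]⟩
  · rintro ⟨b, rfl⟩
    exact ⟨f (b - 1) + t, ⟨b - 1, rfl⟩,
      by simp only [map_sub, map_one, add_right_comm _ t, sub_add_cancel]⟩

section PaleyGraph

variable {p n k : ℕ} [Fact p.Prime]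

theorem image_add_right_paleyGamma (v w : GaloisField p n) :
    (· + w) '' paleyGamma p n k v = paleyGamma p n k (v + w) := by
  ext x
  simp only [Set.image_add_right, paleyGamma, Set.mem_preimage, Set.mem_ofPred_eq]
  ring_nf

theorem notMem_paleyGamma_self (v : GaloisField p n) : v ∉ paleyGamma p n k v := by
  rintro ⟨c, hc, hck⟩
  rw [sub_self] at hck
  exact hc (eq_zero_of_pow_eq_zero hck)

theorem one_mem_paleyGamma_zero : (1 : GaloisField p n) ∈ paleyGamma p n k 0 :=
  ⟨1, one_ne_zero, by rw [one_pow, sub_zero]⟩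

theorem mem_paleyGamma_symm {d : GaloisField p n} (hd₀ : d ≠ 0) (hd : d ^ k = -1)
    {u v : GaloisField p n} (h : u ∈ paleyGamma p n k v) : v ∈ paleyGamma p n k u := by
  obtain ⟨c, hc, hck⟩ := h
  exact ⟨d * c, mul_ne_zero hd₀ hc, by rw [mul_pow, hd, hck]; ring⟩

end PaleyGraph

theorem stmt17_general (p n k : ℕ) [Fact p.Prime]
    (hq : p ^ n ≡ 1 [MOD 2 * k]) (θ : GaloisField p n)
    (a : ℕ → ZMod p) (ha : ∃ i, 1 ≤ i ∧ i < n ∧ a i ≠ 0)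
    (S : Set (GaloisField p n))
    (hS : S = {x | ∃ b : ZMod p, x = algebraMap (ZMod p) (GaloisField p n) b +
      ∑ i ∈ Finset.Ico 1 n, algebraMap (ZMod p) (GaloisField p n) (a i) * θ ^ i})
    (N₀ N₁ : Set (GaloisField p n))
    (hN₀ : N₀ = paleyGamma p n k 0 \ ((paleyGamma p n k 0 ∩ paleyGamma p n k 1) ∪ {1}))
    (hN₁ : N₁ = paleyGamma p n k 1 \ ((paleyGamma p n k 0 ∩ paleyGamma p n k 1) ∪ {0})) :
    (N₀ ∩ S).ncard = (N₁ ∩ S).ncard := by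
  obtain ⟨i, hi, hin, -⟩ := ha
  have hcard : 2 * k ∣ Nat.card (GaloisField p n) - 1 := by
    rw [GaloisField.card p n (by omega)]
    exact (Nat.modEq_iff_dvd' (Nat.one_le_pow _ _ (Fact.out : p.Prime).pos)).mp hq.symm
  obtain ⟨d, hd₀, hd⟩ := FiniteField.exists_pow_eq_neg_one hcard
  have hS₁ : (· + 1) '' S = S :=
    hS ▸ (algebraMap (ZMod p) (GaloisField p n)).image_add_one_setOf_eq_add _
  have hΓ := Set.ncard_image_inter_of_image_eq (add_left_injective 1) hS₁ (paleyGamma p n k 0)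
  have h01 := Set.ncard_image_inter_of_image_eq (add_left_injective 1) hS₁ {0}
  rw [image_add_right_paleyGamma, zero_add] at hΓ
  rw [Set.image_singleton, zero_add] at h01
  set Γ₀ := paleyGamma p n k 0
  set Γ₁ := paleyGamma p n k 1
  have h₀ := Set.ncard_diff_union_singleton_inter_add (C := Γ₀ ∩ Γ₁) Set.inter_subset_left
    one_mem_paleyGamma_zero (fun h => notMem_paleyGamma_self _ h.2) S
  have h₁ := Set.ncard_diff_union_singleton_inter_add (C := Γ₀ ∩ Γ₁) Set.inter_subset_right
    (mem_paleyGamma_symm hd₀ hd one_mem_paleyGamma_zero) (fun h => notMem_paleyGamma_self _ h.1) S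
  subst hN₀ hN₁
  omega

theorem stmt17 (p n k : ℕ) [Fact p.Prime] (hk : 2 ≤ k)
    (hq : p ^ n ≡ 1 [MOD 2 * k]) (θ : GaloisField p n)
    (hθ : ∀ x : GaloisField p n, x ≠ 0 → ∃ j : ℕ, θ ^ j = x)
    (a : ℕ → ZMod p) (ha : ∃ i, 1 ≤ i ∧ i < n ∧ a i ≠ 0)
    (S : Set (GaloisField p n))
    (hS : S = {x | ∃ b : ZMod p, x = algebraMap (ZMod p) (GaloisField p n) b +
      ∑ i ∈ Finset.Ico 1 n, algebraMap (ZMod p) (GaloisField p n) (a i) * θ ^ i})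
    (N₀ N₁ : Set (GaloisField p n))
    (hN₀ : N₀ = paleyGamma p n k 0 \ ((paleyGamma p n k 0 ∩ paleyGamma p n k 1) ∪ {1}))
    (hN₁ : N₁ = paleyGamma p n k 1 \ ((paleyGamma p n k 0 ∩ paleyGamma p n k 1) ∪ {0})) :
    (N₀ ∩ S).ncard = (N₁ ∩ S).ncard :=
  stmt17_general p n k hq θ a ha S hS N₀ N₁ hN₀ hN₁
end

section
/- Let q = p^n with q ≡ 1 (mod 2k), k ≥ 2, and suppose F_p^× ≤ (F_q^×)^k. In the generalized Paley graph P(q,k), for the edge {0,1}, there exists a perfect matching between N₀ = Γ(0) \ (∇ ∪ {1}) and N₁ = Γ(1) \ (∇ ∪ {0}), where Γ(v) = v + (F_q^×)^k and ∇ = Γ(0) ∩ Γ(1). -/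
section Transitions

variable {G : Type*} [AddCommGroup G]

def entryPoints (P : Set G) (d : G) : Set G := {x | x ∈ P ∧ x - d ∉ P}

def exitPoints (P : Set G) (d : G) : Set G := {x | x ∉ P ∧ x - d ∈ P}

theorem ncard_entryPoints_inter_eq [Finite G] (P : Set G) (d : G) {Q : Set G}
    (hQ : ∀ x, x - d ∈ Q ↔ x ∈ Q) :
    (entryPoints P d ∩ Q).ncard = (exitPoints P d ∩ Q).ncard := by
  set A := P ∩ Q
  set B := {x | x - d ∈ P} ∩ Q
  have hB : B = Equiv.addRight d '' A := by
    ext x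
    simp [B, A, ← sub_eq_add_neg, hQ]
  have hAB : (A ∩ B).ncard + (A \ B).ncard = (A ∩ B).ncard + (B \ A).ncard := by
    rw [Set.ncard_inter_add_ncard_sdiff_eq_ncard, Set.inter_comm,
      Set.ncard_inter_add_ncard_sdiff_eq_ncard, hB, Set.ncard_image_of_injective _ (Equiv.injective _)]
  have hentry : entryPoints P d ∩ Q = A \ B := by ext x; simp [entryPoints, A, B]; tauto
  have hexit : exitPoints P d ∩ Q = B \ A := by ext x; simp [exitPoints, A, B]; tauto
  rw [hentry, hexit]
  omega

theorem exists_equiv_entryPoints_exitPoints [Finite G] (P : Set G) (d : G) :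
    ∃ e : entryPoints P d ≃ exitPoints P d,
      ∀ x : entryPoints P d, (x : G) - e x ∈ AddSubgroup.zmultiples d := by
  let π : G → G ⧸ AddSubgroup.zmultiples d := QuotientAddGroup.mk
  have hfiber (s : Set G) (c) : Nat.card {x : s // π x = c} = (s ∩ π ⁻¹' {c}).ncard := by
    rw [← Nat.card_coe_set_eq]
    exact Nat.card_congr (Equiv.subtypeSubtypeEquivSubtypeInter (· ∈ s) (π · = c))
  have hcard (c) : Nat.card {x : entryPoints P d // π x = c} =
      Nat.card {x : exitPoints P d // π x = c} := by
    rw [hfiber, hfiber]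
    refine ncard_entryPoints_inter_eq P d fun x => ?_
    have : π (x - d) = π x := QuotientAddGroup.eq_iff_sub_mem.mpr (by simp)
    simp only [Set.mem_preimage, this]
  let e c := (Finite.card_eq.mp (hcard c)).some
  exact ⟨Equiv.ofFiberEquiv e, fun x =>
    QuotientAddGroup.eq_iff_sub_mem.mp (Equiv.ofFiberEquiv_map e x).symm⟩

end Transitions

section PaleyGraph

variable {p n k : ℕ} [Fact p.Prime]

theorem mem_paleyGamma_iff_sub_mem {v x : GaloisField p n} :
    x ∈ paleyGamma p n k v ↔ x - v ∈ paleyGamma p n k 0 := by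
  simp [paleyGamma]

theorem zero_notMem_paleyGamma_zero : (0 : GaloisField p n) ∉ paleyGamma p n k 0 :=
  fun ⟨c, hc, hck⟩ => pow_ne_zero k hc (by simpa using hck)

end PaleyGraph

theorem stmt18_general (p n k : ℕ) [Fact p.Prime]
    (hsub : ∀ a : ZMod p, a ≠ 0 → ∃ b : GaloisField p n, b ≠ 0 ∧
      b ^ k = algebraMap (ZMod p) (GaloisField p n) a)
    (N₀ N₁ : Set (GaloisField p n))
    (hN₀ : N₀ = paleyGamma p n k 0 \ ((paleyGamma p n k 0 ∩ paleyGamma p n k 1) ∪ {1}))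
    (hN₁ : N₁ = paleyGamma p n k 1 \ ((paleyGamma p n k 0 ∩ paleyGamma p n k 1) ∪ {0})) :
    ∃ f : N₀ ≃ N₁, ∀ x : N₀,
      ∃ c : GaloisField p n, c ≠ 0 ∧ c ^ k = (x : GaloisField p n) - (f x : GaloisField p n) := by
  have hprime (a : ZMod p) (ha : a ≠ 0) :
      algebraMap (ZMod p) (GaloisField p n) a ∈ paleyGamma p n k 0 := by
    simpa [paleyGamma] using hsub a ha
  have hneg_one : (-1 : GaloisField p n) ∈ paleyGamma p n k 0 := by
    simpa using hprime (-1) (neg_ne_zero.mpr one_ne_zero)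
  -- Adjoining `0` makes the exceptional vertices `1 ∈ Γ(0)` and `0 ∈ Γ(1)` non-transitions.
  set P := insert 0 (paleyGamma p n k 0)
  have hP₀ : N₀ = entryPoints P 1 := by
    ext x
    by_cases hx : x = 0
    · subst hx; simp [hN₀, entryPoints, P, hneg_one, zero_notMem_paleyGamma_zero]
    · simp [hN₀, entryPoints, P, hx, mem_paleyGamma_iff_sub_mem (v := 1), sub_eq_zero]; tauto
  have hP₁ : N₁ = exitPoints P 1 := by
    ext x
    by_cases hx : x = 1
    · subst hx; simp [hN₁, exitPoints, P, one_mem_paleyGamma_zero]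
    · simp [hN₁, exitPoints, P, hx, mem_paleyGamma_iff_sub_mem (v := 1), sub_eq_zero]; tauto
  subst hP₀ hP₁
  obtain ⟨e, he⟩ := exists_equiv_entryPoints_exitPoints P 1
  refine ⟨e, fun x => ?_⟩
  have hne : (x : GaloisField p n) - e x ≠ 0 :=
    sub_ne_zero.mpr fun h => (e x).2.1 (h ▸ x.2.1)
  obtain ⟨m, hm⟩ := AddSubgroup.mem_zmultiples_iff.mp (he x)
  rw [zsmul_one, ← map_intCast (algebraMap (ZMod p) (GaloisField p n))] at hm
  have hm0 : (m : ZMod p) ≠ 0 := fun h => hne (by rw [← hm, h, map_zero])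
  simpa [paleyGamma, hm] using hprime m hm0

theorem stmt18 (p n k : ℕ) [Fact p.Prime] (hk : 2 ≤ k)
    (hq : p ^ n ≡ 1 [MOD 2 * k])
    (hsub : ∀ a : ZMod p, a ≠ 0 → ∃ b : GaloisField p n, b ≠ 0 ∧
      b ^ k = algebraMap (ZMod p) (GaloisField p n) a)
    (N₀ N₁ : Set (GaloisField p n))
    (hN₀ : N₀ = paleyGamma p n k 0 \ ((paleyGamma p n k 0 ∩ paleyGamma p n k 1) ∪ {1}))
    (hN₁ : N₁ = paleyGamma p n k 1 \ ((paleyGamma p n k 0 ∩ paleyGamma p n k 1) ∪ {0})) :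
    ∃ f : N₀ ≃ N₁, ∀ x : N₀,
      ∃ c : GaloisField p n, c ≠ 0 ∧ c ^ k = (x : GaloisField p n) - (f x : GaloisField p n) :=
  stmt18_general p n k hsub N₀ N₁ hN₀ hN₁
end
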